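/- arXiv:2402.17444 — 3 statements merged into one kernel-verified Lean document; each statement's English description precedes it below -/
import Mathlib

section
/- Let d ≥ 2 be an integer. Then the function W^(d) is constant on the interval (0,1] and strictly decreasing on the interval [1,∞). -/
open MeasureTheory Filter

/-- The limiting profile `U`. -/
noncomputable def U (r : ℝ) : ℝ :=
  if r ≤ 1 then 1 / 2 else 1 / 2 - Real.arccos (1 / r) / Real.pi

/-- The `d`-dimensional profile `U^(d)`. -/
noncomputable def Ud (d : ℕ) (r : ℝ) : ℝ :=
  U r - ((d : ℝ) - 2) * ∫ t in Set.Ioi (1:ℝ), U (t * r) * t ^ ((1:ℝ) - d)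

/-- The volume of the unit sphere `S^{d-1}` in `ℝ^d`. -/
noncomputable def volSphere (d : ℕ) : ℝ :=
  2 * Real.pi ^ ((d : ℝ) / 2) / Real.Gamma ((d : ℝ) / 2)

/-- The `d`-dimensional Shannon density profile `W^(d)`. -/
noncomputable def Wd (d : ℕ) (r : ℝ) : ℝ :=
  (2 / (Real.Gamma ((d : ℝ) - 1) * volSphere d)) * r ^ (-(d : ℝ)) *
    ∫ t in (0:ℝ)..r, Ud d t * t

/-!
For `r > 0` one has `U r = arcsin r⁻¹ / π`, because `arcsin x = π / 2` for `x ≥ 1`. Substituting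
`s = t r`, the integral in `U^(d)` becomes a tail integral of `U s / s ^ (d - 1)`, which has an
explicit primitive in terms of `K x = ∫₀ˣ sin ^ (d - 2)`; this gives
`U^(d) r = r ^ (d - 2) K (arcsin r⁻¹) / π`. A second explicit primitive gives
`d π ∫₀ʳ U^(d)(t) t dt = r ^ d K (arcsin r⁻¹) + √(r ^ 2 - 1)`. Hence `W^(d)` is a positive multiple
of `K (π / 2)` on `(0, 1]` and of `K (arcsin r⁻¹) + √(r ^ 2 - 1) / r ^ d` on `[1, ∞)`, whose
derivative `-d √(r ^ 2 - 1) / r ^ (d + 1)` is negative. All primitives are smooth except at `r = 1`,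
which the fundamental theorem of calculus off a countable set ignores.
-/

open Real Set Filter Topology

noncomputable def sinPowIntegral (k : ℕ) (x : ℝ) : ℝ := ∫ θ in (0:ℝ)..x, sin θ ^ k

@[simp]
lemma sinPowIntegral_zero_left (x : ℝ) : sinPowIntegral 0 x = x := by simp [sinPowIntegral]

@[simp]
lemma sinPowIntegral_zero_right (k : ℕ) : sinPowIntegral k 0 = 0 := by simp [sinPowIntegral]

lemma hasDerivAt_sinPowIntegral (k : ℕ) (x : ℝ) :
    HasDerivAt (sinPowIntegral k) (sin x ^ k) x :=
  have hc : Continuous fun θ => sin θ ^ k := by fun_prop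
  intervalIntegral.integral_hasDerivAt_right (hc.intervalIntegrable _ _)
    (hc.stronglyMeasurableAtFilter _ _) hc.continuousAt

lemma continuous_sinPowIntegral (k : ℕ) : Continuous (sinPowIntegral k) :=
  continuous_iff_continuousAt.2 fun x => (hasDerivAt_sinPowIntegral k x).continuousAt

lemma abs_sinPowIntegral_le (k : ℕ) (x : ℝ) : |sinPowIntegral k x| ≤ |x| := by
  simpa [sinPowIntegral] using intervalIntegral.norm_integral_le_of_norm_le_const
    (a := 0) (b := x) (C := 1) (f := fun θ => sin θ ^ k) fun θ _ => by
      simpa [abs_pow] using pow_le_one₀ (abs_nonneg _) (abs_sin_le_one θ)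

lemma abs_arcsin_le_pi_div_two (x : ℝ) : |arcsin x| ≤ π / 2 :=
  abs_le.2 ⟨neg_pi_div_two_le_arcsin x, arcsin_le_pi_div_two x⟩

lemma sqrt_one_sub_inv_sq {t : ℝ} (ht : 0 < t) : √(1 - t⁻¹ ^ 2) = √(t ^ 2 - 1) / t := by
  rw [show 1 - t⁻¹ ^ 2 = (t ^ 2 - 1) / t ^ 2 by field_simp, sqrt_div' _ (by positivity),
    sqrt_sq ht.le]

-- Also valid for `t < 1`, where `arcsin t⁻¹ = π / 2` is constant: there `√(t ^ 2 - 1) = 0` and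
-- `1 / 0 = 0`. The same junk values make the derivative formulas below hold on both sides of `1`.
lemma hasDerivAt_arcsin_inv {t : ℝ} (ht0 : 0 < t) (ht1 : t ≠ 1) :
    HasDerivAt (fun t => arcsin t⁻¹) (-(1 / (t * √(t ^ 2 - 1)))) t := by
  have h := (hasDerivAt_arcsin (x := t⁻¹) (by linarith [inv_pos.2 ht0])
    (by simpa [inv_eq_one] using ht1)).comp t (hasDerivAt_inv ht0.ne')
  refine h.congr_deriv ?_
  rw [sqrt_one_sub_inv_sq ht0]
  field_simp

lemma hasDerivAt_sinPowIntegral_arcsin_inv (k : ℕ) {t : ℝ} (ht0 : 0 < t) (ht1 : t ≠ 1) :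
    HasDerivAt (fun t => sinPowIntegral k (arcsin t⁻¹)) (-(t⁻¹ ^ k / (t * √(t ^ 2 - 1)))) t := by
  refine ((hasDerivAt_sinPowIntegral k _).comp t (hasDerivAt_arcsin_inv ht0 ht1)).congr_deriv ?_
  rcases ht1.lt_or_gt with ht1 | ht1
  · have : √(t ^ 2 - 1) = 0 := sqrt_eq_zero'.2 (by nlinarith)
    simp [this]
  · rw [sin_arcsin (by linarith [inv_pos.2 ht0]) (inv_le_one_of_one_le₀ ht1.le)]
    ring

lemma continuous_pow_mul_sinPowIntegral_arcsin_inv (k : ℕ) {n : ℕ} (hn : n ≠ 0) :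
    Continuous fun t : ℝ => t ^ n * sinPowIntegral k (arcsin t⁻¹) := by
  refine continuous_iff_continuousAt.2 fun t => ?_
  rcases eq_or_ne t 0 with rfl | ht
  · have hbdd : IsBoundedUnder (· ≤ ·) (𝓝 (0:ℝ)) fun t => ‖sinPowIntegral k (arcsin t⁻¹)‖ :=
      isBoundedUnder_of ⟨π / 2, fun t =>
        (abs_sinPowIntegral_le k _).trans (abs_arcsin_le_pi_div_two _)⟩
    simpa [ContinuousAt, zero_pow hn] using
      ((continuous_pow n).tendsto' 0 0 (zero_pow hn)).zero_mul_isBoundedUnder_le hbdd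
  · exact (continuousAt_id.pow n).mul
      ((continuous_sinPowIntegral k).continuousAt.comp (continuous_arcsin.continuousAt.comp
        (continuousAt_inv₀ ht)))

lemma U_eq_arcsin_inv {r : ℝ} (hr : 0 < r) : U r = arcsin r⁻¹ / π := by
  rw [U, one_div]
  split_ifs with h
  · rw [arcsin_of_one_le (one_le_inv₀ hr |>.2 h)]
    field_simp
  · rw [arccos_eq_pi_div_two_sub_arcsin]
    field_simp
    ring

lemma continuousOn_arcsin_inv : ContinuousOn (fun s : ℝ => arcsin s⁻¹) (Ioi 0) :=
  continuous_arcsin.comp_continuousOn (continuousOn_inv₀.mono fun _ hs => (mem_Ioi.1 hs).ne')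

lemma integrableOn_U_div_pow {k : ℕ} (hk : k ≠ 0) {r : ℝ} (hr : 0 < r) :
    IntegrableOn (fun s => U s / s ^ (k + 1)) (Ioi r) := by
  have hk1 : (1:ℝ) ≤ k := mod_cast Nat.one_le_iff_ne_zero.2 hk
  have hpow : IntegrableOn (fun s : ℝ => s ^ (-(k + 1 : ℕ) : ℝ)) (Ioi r) :=
    integrableOn_Ioi_rpow_of_lt (by push_cast; linarith) hr
  refine IntegrableOn.congr_fun (f := fun s => arcsin s⁻¹ / π / s ^ (k + 1))
    ((hpow.mul_const (1 / 2)).mono' ?_ ?_)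
    (fun s hs => by simp only [U_eq_arcsin_inv (hr.trans hs)]) measurableSet_Ioi
  · refine ContinuousOn.aestronglyMeasurable ?_ measurableSet_Ioi
    exact ((continuousOn_arcsin_inv.div_const π).div (continuousOn_pow _)
      fun _ hs => pow_ne_zero _ (mem_Ioi.1 hs).ne').mono (Ioi_subset_Ioi hr.le)
  · filter_upwards [ae_restrict_mem measurableSet_Ioi] with s hs
    have hs0 : 0 < s := hr.trans hs
    have harcsin : |arcsin s⁻¹| / π ≤ 1 / 2 := by
      rw [div_le_iff₀ pi_pos]
      linarith [abs_arcsin_le_pi_div_two s⁻¹]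
    rw [rpow_neg hs0.le, rpow_natCast, Real.norm_eq_abs, abs_div, abs_div, abs_of_pos pi_pos,
      abs_of_pos (pow_pos hs0 _), div_eq_mul_inv _ (s ^ _), mul_comm]
    exact mul_le_mul_of_nonneg_left harcsin (by positivity)

noncomputable def tailPrimitive (k : ℕ) (s : ℝ) : ℝ :=
  (sinPowIntegral k (arcsin s⁻¹) - arcsin s⁻¹ / s ^ k) / π

lemma hasDerivAt_tailPrimitive {k : ℕ} (hk : k ≠ 0) {s : ℝ} (hs0 : 0 < s) (hs1 : s ≠ 1) :
    HasDerivAt (tailPrimitive k) (k * (U s / s ^ (k + 1))) s := by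
  obtain ⟨m, rfl⟩ := Nat.exists_eq_add_one.2 (Nat.pos_of_ne_zero hk)
  have h := ((hasDerivAt_sinPowIntegral_arcsin_inv (m + 1) hs0 hs1).sub
    ((hasDerivAt_arcsin_inv hs0 hs1).div (hasDerivAt_pow (m + 1) s)
      (pow_ne_zero _ hs0.ne'))).div_const π
  refine h.congr_deriv ?_
  rw [U_eq_arcsin_inv hs0, Nat.add_sub_cancel, inv_pow]
  field_simp
  ring

lemma continuousOn_tailPrimitive (k : ℕ) : ContinuousOn (tailPrimitive k) (Ioi 0) :=
  (((continuous_sinPowIntegral k).comp_continuousOn continuousOn_arcsin_inv).sub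
    (continuousOn_arcsin_inv.div (continuousOn_pow k)
      fun _ hs => pow_ne_zero _ (mem_Ioi.1 hs).ne')).div_const π

lemma tendsto_tailPrimitive_atTop {k : ℕ} (hk : k ≠ 0) :
    Tendsto (tailPrimitive k) atTop (𝓝 0) := by
  have harcsin : Tendsto (fun s : ℝ => arcsin s⁻¹) atTop (𝓝 0) := by
    simpa [Function.comp_def] using (continuous_arcsin.tendsto 0).comp tendsto_inv_atTop_zero
  have hK : Tendsto (fun s : ℝ => sinPowIntegral k (arcsin s⁻¹)) atTop (𝓝 0) := by
    simpa [Function.comp_def] using ((continuous_sinPowIntegral k).tendsto 0).comp harcsin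
  unfold tailPrimitive
  simpa using (hK.sub (harcsin.div_atTop (tendsto_pow_atTop hk))).div_const π

theorem integral_Ioi_of_hasDerivAt_off_countable {E : Type*} [NormedAddCommGroup E]
    [NormedSpace ℝ E] [CompleteSpace E] {f f' : ℝ → E} {a : ℝ} {m : E} {s : Set ℝ}
    (hs : s.Countable) (hcont : ContinuousOn f (Ici a))
    (hderiv : ∀ x ∈ Ioi a \ s, HasDerivAt f (f' x) x) (hint : IntegrableOn f' (Ioi a))
    (hf : Tendsto f atTop (𝓝 m)) : ∫ x in Ioi a, f' x = m - f a := by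
  refine tendsto_nhds_unique (intervalIntegral_tendsto_integral_Ioi a hint tendsto_id) ?_
  refine (hf.sub_const (f a)).congr' ?_
  filter_upwards [eventually_ge_atTop a] with b hb
  exact (integral_eq_of_hasDerivAt_off_countable_of_le f f' hb hs
    (hcont.mono Icc_subset_Ici_self) (fun x hx => hderiv x ⟨hx.1.1, hx.2⟩)
    ((intervalIntegrable_iff_integrableOn_Ioc_of_le hb).2
      (hint.mono_set Ioc_subset_Ioi_self))).symm

lemma mul_integral_U_div_pow_Ioi (k : ℕ) {r : ℝ} (hr : 0 < r) :
    k * ∫ s in Ioi r, U s / s ^ (k + 1) = -tailPrimitive k r := by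
  rcases eq_or_ne k 0 with rfl | hk
  · simp [tailPrimitive]
  rw [← integral_const_mul, integral_Ioi_of_hasDerivAt_off_countable (countable_singleton 1)
    ((continuousOn_tailPrimitive k).mono (Ici_subset_Ioi.2 hr))
    (fun s hs => hasDerivAt_tailPrimitive hk (hr.trans hs.1) hs.2)
    ((integrableOn_U_div_pow hk hr).const_mul _) (tendsto_tailPrimitive_atTop hk), zero_sub]

lemma integral_U_mul_div_pow_Ioi_one (k : ℕ) {r : ℝ} (hr : 0 < r) :
    ∫ t in Ioi 1, U (t * r) / t ^ (k + 1) = r ^ k * ∫ s in Ioi r, U s / s ^ (k + 1) := by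
  have h := integral_comp_mul_right_Ioi (fun s => U s / s ^ (k + 1)) 1 hr
  simp only [one_mul, smul_eq_mul, mul_pow, ← div_div, integral_div] at h
  rw [div_eq_iff (by positivity)] at h
  rw [h]
  field_simp
  ring

lemma Ud_add_two (k : ℕ) {r : ℝ} (hr : 0 < r) :
    Ud (k + 2) r = r ^ k * sinPowIntegral k (arcsin r⁻¹) / π := by
  have hrpow : ∫ t in Ioi (1:ℝ), U (t * r) * t ^ ((1:ℝ) - (k + 2 : ℕ)) =
      ∫ t in Ioi 1, U (t * r) / t ^ (k + 1) := by
    refine setIntegral_congr_fun measurableSet_Ioi fun t ht => ?_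
    rw [show (1:ℝ) - (k + 2 : ℕ) = -((k + 1 : ℕ) : ℝ) by push_cast; ring,
      rpow_neg (zero_le_one.trans ht.out.le), rpow_natCast, div_eq_mul_inv]
  have hk : ((k + 2 : ℕ) : ℝ) - 2 = k := by push_cast; ring
  rw [Ud, hrpow, hk, integral_U_mul_div_pow_Ioi_one k hr, mul_left_comm,
    mul_integral_U_div_pow_Ioi k hr, U_eq_arcsin_inv hr, tailPrimitive]
  field_simp
  ring

noncomputable def radialPrimitive (k : ℕ) (r : ℝ) : ℝ :=
  r ^ (k + 2) * sinPowIntegral k (arcsin r⁻¹) + √(r ^ 2 - 1)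

lemma continuous_radialPrimitive (k : ℕ) : Continuous (radialPrimitive k) :=
  (continuous_pow_mul_sinPowIntegral_arcsin_inv k (Nat.succ_ne_zero _)).add (by fun_prop)

lemma hasDerivAt_sqrt_sq_sub_one {t : ℝ} (ht0 : 0 < t) (ht1 : t ≠ 1) :
    HasDerivAt (fun t => √(t ^ 2 - 1)) (t / √(t ^ 2 - 1)) t := by
  have hne : t ^ 2 - 1 ≠ 0 := by
    rw [show t ^ 2 - 1 = (t - 1) * (t + 1) by ring]
    exact mul_ne_zero (sub_ne_zero.2 ht1) (by linarith)
  refine ((hasDerivAt_sqrt hne).comp t ((hasDerivAt_pow 2 t).sub_const 1)).congr_deriv ?_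
  field_simp
  ring

lemma hasDerivAt_radialPrimitive (k : ℕ) {r : ℝ} (hr0 : 0 < r) (hr1 : r ≠ 1) :
    HasDerivAt (radialPrimitive k) ((k + 2) * (r ^ (k + 1) * sinPowIntegral k (arcsin r⁻¹))) r := by
  refine (((hasDerivAt_pow (k + 2) r).mul (hasDerivAt_sinPowIntegral_arcsin_inv k hr0 hr1)).add
    (hasDerivAt_sqrt_sq_sub_one hr0 hr1)).congr_deriv ?_
  rw [show k + 2 - 1 = k + 1 from rfl, inv_pow]
  push_cast
  field_simp
  ring

lemma integral_Ud_mul_self (k : ℕ) {r : ℝ} (hr : 0 ≤ r) :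
    ∫ t in (0:ℝ)..r, Ud (k + 2) t * t = radialPrimitive k r / ((k + 2) * π) := by
  have hcongr : EqOn (fun t => Ud (k + 2) t * t)
      (fun t => t ^ (k + 1) * sinPowIntegral k (arcsin t⁻¹) / π) (uIcc 0 r) := by
    intro t ht
    rcases (uIcc_of_le hr ▸ ht).1.eq_or_lt with rfl | ht0
    · simp
    · simp only [Ud_add_two k ht0]
      ring
  rw [intervalIntegral.integral_congr hcongr, integral_eq_of_hasDerivAt_off_countable_of_le
    (fun t => radialPrimitive k t / ((k + 2) * π)) _ hr (countable_singleton 1)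
    ((continuous_radialPrimitive k).div_const _).continuousOn
    (fun t ht => ((hasDerivAt_radialPrimitive k ht.1.1 ht.2).div_const _).congr_deriv (by
      field_simp))
    ((continuous_pow_mul_sinPowIntegral_arcsin_inv k (Nat.succ_ne_zero _)).div_const π
      |>.intervalIntegrable _ _)]
  simp [radialPrimitive, sqrt_eq_zero']

lemma radialPrimitive_of_le (k : ℕ) {r : ℝ} (hr0 : 0 < r) (hr1 : r ≤ 1) :
    radialPrimitive k r = r ^ (k + 2) * sinPowIntegral k (π / 2) := by
  rw [radialPrimitive, arcsin_of_one_le (one_le_inv₀ hr0 |>.2 hr1),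
    sqrt_eq_zero'.2 (by nlinarith), add_zero]

lemma strictAntiOn_radialPrimitive_div_pow (k : ℕ) :
    StrictAntiOn (fun r => radialPrimitive k r / r ^ (k + 2)) (Ici 1) := by
  refine strictAntiOn_of_deriv_neg (convex_Ici 1)
    ((continuous_radialPrimitive k).continuousOn.div (continuousOn_pow _)
      fun r hr => pow_ne_zero _ (zero_lt_one.trans_le hr).ne') fun r hr => ?_
  rw [interior_Ici] at hr
  have hr0 : 0 < r := zero_lt_one.trans hr
  have hsqrt : 0 < √(r ^ 2 - 1) := sqrt_pos.2 (by nlinarith [hr.out])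
  have hderiv : HasDerivAt (fun r => radialPrimitive k r / r ^ (k + 2)) _ r :=
    (hasDerivAt_radialPrimitive k hr0 hr.out.ne').div (hasDerivAt_pow (k + 2) r)
      (pow_ne_zero _ hr0.ne')
  rw [hderiv.deriv, show k + 2 - 1 = k + 1 from rfl]
  calc _ = -((k + 2) * r ^ (k + 1) * √(r ^ 2 - 1) / (r ^ (k + 2)) ^ 2) := by
        unfold radialPrimitive
        push_cast
        ring
    _ < 0 := neg_neg_of_pos (by positivity)

lemma volSphere_pos {d : ℕ} (hd : d ≠ 0) : 0 < volSphere d := by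
  have := Gamma_pos_of_pos (by positivity : (0:ℝ) < d / 2)
  unfold volSphere
  positivity

lemma Wd_add_two (k : ℕ) {r : ℝ} (hr : 0 < r) :
    Wd (k + 2) r = 2 / (Gamma (k + 1) * volSphere (k + 2)) / ((k + 2) * π) *
      (radialPrimitive k r / r ^ (k + 2)) := by
  rw [Wd, integral_Ud_mul_self k hr.le, show ((k + 2 : ℕ) : ℝ) - 1 = k + 1 by push_cast; ring,
    rpow_neg hr.le, rpow_natCast]
  ring

theorem Wd_const_and_strictAnti (d : ℕ) (hd : 2 ≤ d) :
    (∀ r ∈ Set.Ioc (0:ℝ) 1, ∀ s ∈ Set.Ioc (0:ℝ) 1, Wd d r = Wd d s) ∧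
    StrictAntiOn (Wd d) (Set.Ici 1) := by
  obtain ⟨k, rfl⟩ := Nat.exists_eq_add_of_le' hd
  have hconst : 0 < 2 / (Gamma (k + 1) * volSphere (k + 2)) / ((k + 2) * π) := by
    have := Gamma_pos_of_pos (by positivity : (0:ℝ) < k + 1)
    have := volSphere_pos (by omega : k + 2 ≠ 0)
    positivity
  refine ⟨fun r hr s hs => ?_, fun r hr s hs hrs => ?_⟩
  · rw [Wd_add_two k hr.1, Wd_add_two k hs.1, radialPrimitive_of_le k hr.1 hr.2,
      radialPrimitive_of_le k hs.1 hs.2, mul_div_cancel_left₀ _ (pow_ne_zero _ hr.1.ne'),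
      mul_div_cancel_left₀ _ (pow_ne_zero _ hs.1.ne')]
  · rw [Wd_add_two k (zero_lt_one.trans_le hr), Wd_add_two k (zero_lt_one.trans_le hs)]
    exact mul_lt_mul_of_pos_left (strictAntiOn_radialPrimitive_div_pow k hr hs hrs) hconst
end

section
/- Let d ≥ 2 be an integer. Then lim_{r→∞} r·U^(d)(r) = 1/((d−1)·π). -/
open MeasureTheory Filter

lemma U_eq_arcsin {r : ℝ} (h : 1 ≤ r) : U r = Real.arcsin (1 / r) / Real.pi := by
  unfold U
  rcases eq_or_lt_of_le h with h1 | h1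
  · rw [← h1]
    rw [if_pos le_rfl]
    norm_num [Real.arcsin_one]
    field_simp
  · rw [if_neg (by linarith), Real.arccos_eq_pi_div_two_sub_arcsin]
    have hπ := Real.pi_ne_zero
    field_simp
    ring

lemma measurable_U : Measurable U := by
  unfold U
  exact Measurable.ite (measurableSet_le measurable_id measurable_const) measurable_const
    (measurable_const.sub
      ((Real.continuous_arccos.measurable.comp (measurable_const.div measurable_id)).div_const _))

lemma le_arcsin {x : ℝ} (h0 : 0 ≤ x) (h1 : x ≤ 1) : x ≤ Real.arcsin x := by
  nth_rewrite 1 [← Real.sin_arcsin (by linarith) h1]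
  exact Real.sin_le (Real.arcsin_nonneg.2 h0)

lemma arcsin_le_div {x : ℝ} (h0 : 0 < x) (h1 : x < 1) :
    Real.arcsin x ≤ x / Real.sqrt (1 - x ^ 2) := by
  have h2 : Real.arcsin x < Real.tan (Real.arcsin x) :=
    Real.lt_tan (Real.arcsin_pos.2 h0) (Real.arcsin_lt_pi_div_two.2 h1)
  rw [Real.tan_eq_sin_div_cos, Real.sin_arcsin (by linarith) h1.le, Real.cos_arcsin] at h2
  exact h2.le

lemma U_ge {x : ℝ} (h : 1 ≤ x) : (1 / x) / Real.pi ≤ U x := by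
  rw [U_eq_arcsin h]
  have h0 : (0:ℝ) < x := lt_of_lt_of_le one_pos h
  exact div_le_div_of_nonneg_right
    (le_arcsin (by positivity) (by rw [div_le_one h0]; linarith)) Real.pi_pos.le

lemma U_le {x : ℝ} (h : 1 < x) :
    U x ≤ (1 / x) / Real.sqrt (1 - (1 / x) ^ 2) / Real.pi := by
  rw [U_eq_arcsin h.le]
  have h0 : (0:ℝ) < x := lt_trans one_pos h
  exact div_le_div_of_nonneg_right
    (arcsin_le_div (by positivity) (by rw [div_lt_one h0]; linarith)) Real.pi_pos.le

theorem tendsto_mul_Ud_atTop (d : ℕ) (hd : 2 ≤ d) :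
    Tendsto (fun r : ℝ => r * Ud d r) atTop
      (nhds (1 / (((d : ℝ) - 1) * Real.pi))) := by
  have hπ : (0:ℝ) < Real.pi := Real.pi_pos
  have hd2 : (2:ℝ) ≤ (d:ℝ) := by exact_mod_cast hd
  have hd1 : (0:ℝ) < (d:ℝ) - 1 := by linarith
  have hdlt : -(d:ℝ) < -1 := by linarith
  -- the function s r = sqrt (1 - (1/r)^2)
  set s : ℝ → ℝ := fun r => Real.sqrt (1 - (1 / r) ^ 2) with hs_def
  have hs_tendsto : Tendsto s atTop (nhds 1) := by
    have h1 : Tendsto (fun r : ℝ => 1 - (1 / r) ^ 2) atTop (nhds 1) := by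
      have h2 : Tendsto (fun r : ℝ => (1 / r) ^ 2) atTop (nhds 0) := by
        simpa [one_div] using ((tendsto_inv_atTop_zero (𝕜 := ℝ)).pow 2)
      simpa using tendsto_const_nhds.sub h2
    have h3 := (Real.continuous_sqrt.tendsto 1).comp h1
    rw [Real.sqrt_one] at h3
    exact h3
  have hs_inv : Tendsto (fun r => 1 / s r) atTop (nhds 1) := by
    simpa [one_div] using hs_tendsto.inv₀ one_ne_zero
  -- value of the model integral
  have hint_pow : ∫ t in Set.Ioi (1:ℝ), t ^ (-(d:ℝ)) = 1 / ((d:ℝ) - 1) := by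
    rw [integral_Ioi_rpow_of_lt hdlt one_pos]
    rw [Real.one_rpow]
    rw [div_eq_div_iff (by linarith) (by linarith)]
    ring
  have hint_pow_int : IntegrableOn (fun t : ℝ => t ^ (-(d:ℝ))) (Set.Ioi 1) :=
    integrableOn_Ioi_rpow_of_lt hdlt one_pos
  -- squeeze bounds
  have key : ∀ r : ℝ, 2 ≤ r →
      1 / Real.pi - ((d:ℝ) - 2) / (((d:ℝ) - 1) * Real.pi) * (1 / s r) ≤ r * Ud d r ∧
      r * Ud d r ≤ 1 / Real.pi * (1 / s r) - ((d:ℝ) - 2) / (((d:ℝ) - 1) * Real.pi) := by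
    intro r hr
    have hr0 : (0:ℝ) < r := by linarith
    have hr1 : (1:ℝ) < r := by linarith
    have hsr_pos : 0 < s r := by
      have : (1 / r) ^ 2 < 1 := by
        rw [sq_lt_one_iff_abs_lt_one, abs_of_pos (by positivity)]
        rw [div_lt_one hr0]; linarith
      exact Real.sqrt_pos.2 (by linarith)
    -- bounds on components
    have hmain_low : 1 / Real.pi ≤ r * U r := by
      have := U_ge hr1.le
      calc 1 / Real.pi = r * ((1 / r) / Real.pi) := by field_simp
        _ ≤ r * U r := by
          exact mul_le_mul_of_nonneg_left this hr0.le
    have hmain_up : r * U r ≤ 1 / Real.pi * (1 / s r) := by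
      have := U_le hr1
      calc r * U r ≤ r * ((1 / r) / s r / Real.pi) :=
            mul_le_mul_of_nonneg_left this hr0.le
        _ = 1 / Real.pi * (1 / s r) := by field_simp
    -- pointwise bounds for the integrand on Ioi 1
    have hptlow : ∀ t ∈ Set.Ioi (1:ℝ),
        1 / (Real.pi * r) * t ^ (-(d:ℝ)) ≤ U (t * r) * t ^ ((1:ℝ) - d) := by
      intro t ht
      have ht1 : (1:ℝ) < t := ht
      have ht0 : (0:ℝ) < t := by linarith
      have htr : (1:ℝ) ≤ t * r := by nlinarith
      have hUg := U_ge htr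
      have hpow_pos : (0:ℝ) < t ^ ((1:ℝ) - d) := Real.rpow_pos_of_pos ht0 _
      have hstep : 1 / (t * r) / Real.pi * t ^ ((1:ℝ) - d) ≤ U (t * r) * t ^ ((1:ℝ) - d) :=
        mul_le_mul_of_nonneg_right hUg hpow_pos.le
      refine le_trans (le_of_eq ?_) hstep
      rw [show ((1:ℝ) - d) = -(d:ℝ) + 1 by ring, Real.rpow_add_one ht0.ne']
      field_simp
    have hptup : ∀ t ∈ Set.Ioi (1:ℝ),
        U (t * r) * t ^ ((1:ℝ) - d) ≤ 1 / (Real.pi * r * s r) * t ^ (-(d:ℝ)) := by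
      intro t ht
      have ht1 : (1:ℝ) < t := ht
      have ht0 : (0:ℝ) < t := by linarith
      have htr0 : (0:ℝ) < t * r := by positivity
      have htr : (1:ℝ) < t * r := by nlinarith
      have hUl := U_le htr
      have hss : s r ≤ Real.sqrt (1 - (1 / (t * r)) ^ 2) := by
        apply Real.sqrt_le_sqrt
        have : 1 / (t * r) ≤ 1 / r := by
          apply div_le_div_of_nonneg_left one_pos.le hr0
          nlinarith
        have h0' : 0 ≤ 1 / (t * r) := by positivity
        nlinarith
      have hU2 : U (t * r) ≤ (1 / (t * r)) / s r / Real.pi := by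
        refine le_trans hUl ?_
        apply div_le_div_of_nonneg_right _ hπ.le
        apply div_le_div_of_nonneg_left (by positivity) hsr_pos hss
      have hpow_pos : (0:ℝ) < t ^ ((1:ℝ) - d) := Real.rpow_pos_of_pos ht0 _
      have hstep : U (t * r) * t ^ ((1:ℝ) - d) ≤
          (1 / (t * r)) / s r / Real.pi * t ^ ((1:ℝ) - d) :=
        mul_le_mul_of_nonneg_right hU2 hpow_pos.le
      refine le_trans hstep (le_of_eq ?_)
      rw [show ((1:ℝ) - d) = -(d:ℝ) + 1 by ring, Real.rpow_add_one ht0.ne']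
      field_simp
    -- integrability of the integrand
    have hmeas : AEStronglyMeasurable (fun t : ℝ => U (t * r) * t ^ ((1:ℝ) - d))
        (volume.restrict (Set.Ioi 1)) := by
      apply Measurable.aestronglyMeasurable
      exact (measurable_U.comp (measurable_id.mul_const r)).mul
        (measurable_id.pow measurable_const)
    have hInt : IntegrableOn (fun t : ℝ => U (t * r) * t ^ ((1:ℝ) - d)) (Set.Ioi 1) := by
      refine (hint_pow_int.const_mul (1 / (Real.pi * r * s r))).mono' hmeas ?_
      rw [ae_restrict_iff' measurableSet_Ioi]
      refine ae_of_all _ fun t ht => ?_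
      have ht1 : (1:ℝ) < t := ht
      have ht0 : (0:ℝ) < t := by linarith
      have htr : (1:ℝ) ≤ t * r := by nlinarith
      have hU0 : 0 ≤ U (t * r) := le_trans (by positivity) (U_ge htr)
      have hpow_pos : (0:ℝ) < t ^ ((1:ℝ) - d) := Real.rpow_pos_of_pos ht0 _
      rw [Real.norm_eq_abs, abs_of_nonneg (by positivity)]
      exact hptup t ht
    have hIlow_int : IntegrableOn (fun t : ℝ => 1 / (Real.pi * r) * t ^ (-(d:ℝ)))
        (Set.Ioi 1) := hint_pow_int.const_mul _
    have hIup_int : IntegrableOn (fun t : ℝ => 1 / (Real.pi * r * s r) * t ^ (-(d:ℝ)))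
        (Set.Ioi 1) := hint_pow_int.const_mul _
    have hIlow : 1 / (Real.pi * r) * (1 / ((d:ℝ) - 1)) ≤
        ∫ t in Set.Ioi (1:ℝ), U (t * r) * t ^ ((1:ℝ) - d) := by
      have := setIntegral_mono_on hIlow_int hInt measurableSet_Ioi hptlow
      rwa [MeasureTheory.integral_const_mul, hint_pow] at this
    have hIup : (∫ t in Set.Ioi (1:ℝ), U (t * r) * t ^ ((1:ℝ) - d)) ≤
        1 / (Real.pi * r * s r) * (1 / ((d:ℝ) - 1)) := by
      have := setIntegral_mono_on hInt hIup_int measurableSet_Ioi hptup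
      rwa [MeasureTheory.integral_const_mul, hint_pow] at this
    -- combine
    have hEq : r * Ud d r = r * U r - ((d:ℝ) - 2) *
        (r * ∫ t in Set.Ioi (1:ℝ), U (t * r) * t ^ ((1:ℝ) - d)) := by
      unfold Ud; ring
    have hc : (0:ℝ) ≤ (d:ℝ) - 2 := by linarith
    have hrIlow : 1 / (((d:ℝ) - 1) * Real.pi) ≤
        r * ∫ t in Set.Ioi (1:ℝ), U (t * r) * t ^ ((1:ℝ) - d) := by
      have := mul_le_mul_of_nonneg_left hIlow hr0.le
      refine le_trans (le_of_eq ?_) this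
      field_simp
    have hrIup : (r * ∫ t in Set.Ioi (1:ℝ), U (t * r) * t ^ ((1:ℝ) - d)) ≤
        1 / (((d:ℝ) - 1) * Real.pi) * (1 / s r) := by
      have := mul_le_mul_of_nonneg_left hIup hr0.le
      refine le_trans this (le_of_eq ?_)
      field_simp
    constructor
    · rw [hEq]
      have h1 := mul_le_mul_of_nonneg_left hrIup hc
      have : ((d:ℝ) - 2) / (((d:ℝ) - 1) * Real.pi) * (1 / s r) =
          ((d:ℝ) - 2) * (1 / (((d:ℝ) - 1) * Real.pi) * (1 / s r)) := by ring
      rw [this]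
      linarith
    · rw [hEq]
      have h1 := mul_le_mul_of_nonneg_left hrIlow hc
      have : ((d:ℝ) - 2) / (((d:ℝ) - 1) * Real.pi) =
          ((d:ℝ) - 2) * (1 / (((d:ℝ) - 1) * Real.pi)) := by ring
      rw [this]
      linarith
  -- squeeze
  have hlim : (1 : ℝ) / (((d:ℝ) - 1) * Real.pi) =
      1 / Real.pi - ((d:ℝ) - 2) / (((d:ℝ) - 1) * Real.pi) * 1 := by
    field_simp
    ring
  have hL : Tendsto (fun r => 1 / Real.pi - ((d:ℝ) - 2) / (((d:ℝ) - 1) * Real.pi) * (1 / s r))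
      atTop (nhds (1 / (((d:ℝ) - 1) * Real.pi))) := by
    rw [hlim]
    exact tendsto_const_nhds.sub (tendsto_const_nhds.mul hs_inv)
  have hU : Tendsto (fun r => 1 / Real.pi * (1 / s r) - ((d:ℝ) - 2) / (((d:ℝ) - 1) * Real.pi))
      atTop (nhds (1 / (((d:ℝ) - 1) * Real.pi))) := by
    have : (1 : ℝ) / (((d:ℝ) - 1) * Real.pi) =
        1 / Real.pi * 1 - ((d:ℝ) - 2) / (((d:ℝ) - 1) * Real.pi) := by
      field_simp
      ring
    rw [this]
    exact (tendsto_const_nhds.mul hs_inv).sub tendsto_const_nhds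
  refine tendsto_of_tendsto_of_tendsto_of_le_of_le' hL hU ?_ ?_
  · filter_upwards [eventually_ge_atTop (2:ℝ)] with r hr using (key r hr).1
  · filter_upwards [eventually_ge_atTop (2:ℝ)] with r hr using (key r hr).2
end

section
/- Discrete-to-integral limit for the dimension weights: let d ≥ 3 be an integer and r > 0. Then lim_{L→∞} ∑_{l=1}^{L−1} ((C_{l+1}^d − C_l^d)/C_L^d) · U((L/l)·r) = (d−2)·∫_1^∞ U(t·r)·t^{1−d} dt, where the limit is taken over natural numbers L ≥ 2. -/
/-!
Write `d = f + 3`. Both `C_L` and `C_{l+1} - C_l` are sums of two binomial coefficients, so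
`L (C_{l+1} - C_l) / C_L ≈ (f + 1) (l / L)^f`: the sum is a Riemann sum, tagged at right
endpoints, for `∫₀¹ (d - 2) s^(d-3) U(r / s) ds`. Since `U` is bounded and continuous, dominated
convergence for the corresponding step functions on `(0, 1)` gives the limit, and the substitution
`s = 1 / t` turns it into the stated integral.
-/

open MeasureTheory Filter

/-- Dimension of the space of degree-`l` spherical harmonics in `ℝ^d`. -/
def Cdim (d l : ℕ) : ℕ :=
  Nat.choose (l + d - 2) (d - 2) + Nat.choose (l + d - 3) (d - 2)

open Set Topology
open scoped Nat

theorem U_eq_half_sub_arccos_inv_max (x : ℝ) : U x = 1 / 2 - Real.arccos (max 1 x)⁻¹ / Real.pi := by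
  unfold U
  split_ifs with h
  · simp [max_eq_left h]
  · rw [max_eq_right (not_le.mp h).le, one_div x]

theorem continuous_U : Continuous U := by
  have hmax : ∀ x : ℝ, max 1 x ≠ 0 := fun x => (lt_max_of_lt_left one_pos).ne'
  rw [funext U_eq_half_sub_arccos_inv_max]
  fun_prop (disch := exact hmax _)

theorem abs_U_le (x : ℝ) : |U x| ≤ 1 / 2 := by
  have hpos : 0 ≤ (max 1 x)⁻¹ := inv_nonneg.mpr (le_max_of_le_left zero_le_one)
  have h0 : 0 ≤ Real.arccos (max 1 x)⁻¹ / Real.pi :=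
    div_nonneg (Real.arccos_nonneg _) Real.pi_pos.le
  have h1 : Real.arccos (max 1 x)⁻¹ / Real.pi ≤ 1 / 2 := by
    rw [div_le_iff₀ Real.pi_pos]
    linarith [Real.arccos_le_pi_div_two.mpr hpos]
  rw [U_eq_half_sub_arccos_inv_max, abs_le]
  constructor <;> linarith

theorem mem_Ioc_div_iff_ceil_eq {L : ℕ} (hL : 0 < L) {s : ℝ} (hs : 0 < s) (l : ℕ) :
    s ∈ Ioc (((l : ℝ) - 1) / L) (l / L) ↔ ⌈s * L⌉₊ = l := by
  have hL' : (0 : ℝ) < L := Nat.cast_pos.mpr hL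
  rcases Nat.eq_zero_or_pos l with rfl | hl
  · simp [hs.not_ge, mul_pos hs hL']
  · rw [Nat.ceil_eq_iff hl.ne', Nat.cast_pred hl, mem_Ioc, div_lt_iff₀ hL', le_div_iff₀ hL']

theorem sum_indicator_Ioc_div_apply (S : Finset ℕ) (c : ℕ → ℝ) {L : ℕ} (hL : 0 < L) {s : ℝ}
    (hs : 0 < s) :
    ∑ l ∈ S, (Ioc (((l : ℝ) - 1) / L) (l / L)).indicator (fun _ => c l) s
      = if ⌈s * L⌉₊ ∈ S then c ⌈s * L⌉₊ else 0 := by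
  simp only [indicator_apply, mem_Ioc_div_iff_ceil_eq hL hs]
  exact Finset.sum_ite_eq S _ c

theorem setIntegral_sum_indicator_Ioc_div (c : ℕ → ℝ) (L : ℕ) :
    ∫ s in Ioo (0 : ℝ) 1,
        ∑ l ∈ Finset.Icc 1 (L - 1), (Ioc (((l : ℝ) - 1) / L) (l / L)).indicator (fun _ => c l) s
      = ∑ l ∈ Finset.Icc 1 (L - 1), c l / L := by
  rw [integral_finsetSum]
  · refine Finset.sum_congr rfl fun l hl => ?_
    obtain ⟨hl1, hlL⟩ := Finset.mem_Icc.mp hl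
    have hL : (0 : ℝ) < L := by exact_mod_cast (by omega : 0 < L)
    have hsub : Ioc (((l : ℝ) - 1) / L) (l / L) ⊆ Ioo 0 1 := by
      have h1 : (1 : ℝ) ≤ l := by exact_mod_cast hl1
      have h2 : (l : ℝ) + 1 ≤ L := by exact_mod_cast (by omega : l + 1 ≤ L)
      refine Ioc_subset_Ioo_right ?_ |>.trans (Ioo_subset_Ioo ?_ le_rfl)
      · rw [div_lt_one hL]; linarith
      · exact div_nonneg (by linarith) hL.le
    rw [integral_indicator_const _ measurableSet_Ioc, measureReal_restrict_apply measurableSet_Ioc,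
      inter_eq_left.mpr hsub, Real.volume_real_Ioc_of_le (by gcongr; linarith), smul_eq_mul]
    field_simp
    ring
  · exact fun l _ => (integrable_const (c l)).indicator measurableSet_Ioc

/-- Dominated convergence for the step function equal to `a L l` on `((l - 1) / L, l / L]`,
whose value at `s` is `a L ⌈s * L⌉₊`. -/
theorem tendsto_sum_div_of_tendsto_ceil {a : ℕ → ℕ → ℝ} {g : ℝ → ℝ} {M : ℝ}
    (hbound : ∀ L, ∀ l ∈ Finset.Icc 1 (L - 1), |a L l| ≤ M)
    (hlim : ∀ s ∈ Ioo (0 : ℝ) 1, Tendsto (fun L : ℕ => a L ⌈s * L⌉₊) atTop (𝓝 (g s))) :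
    Tendsto (fun L : ℕ => ∑ l ∈ Finset.Icc 1 (L - 1), a L l / L) atTop
      (𝓝 (∫ s in Ioo (0 : ℝ) 1, g s)) := by
  set F : ℕ → ℝ → ℝ := fun L s =>
    ∑ l ∈ Finset.Icc 1 (L - 1), (Ioc (((l : ℝ) - 1) / L) (l / L)).indicator (fun _ => a L l) s
  have hF : ∀ L, 0 < L → ∀ s ∈ Ioo (0 : ℝ) 1,
      F L s = if ⌈s * L⌉₊ ∈ Finset.Icc 1 (L - 1) then a L ⌈s * L⌉₊ else 0 :=
    fun L hL s hs => sum_indicator_Ioc_div_apply _ _ hL hs.1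
  have hlimF : ∀ s ∈ Ioo (0 : ℝ) 1, Tendsto (fun L => F L s) atTop (𝓝 (g s)) := by
    intro s hs
    refine (hlim s hs).congr' ?_
    have hlt : ∀ᶠ L : ℕ in atTop, (⌈s * L⌉₊ : ℝ) / L < 1 :=
      ((tendsto_nat_ceil_mul_div_atTop hs.1.le).comp tendsto_natCast_atTop_atTop).eventually
        (gt_mem_nhds hs.2)
    filter_upwards [hlt, eventually_gt_atTop 0] with L hlt hL
    have hL' : (0 : ℝ) < L := Nat.cast_pos.mpr hL
    have hmem : ⌈s * L⌉₊ ∈ Finset.Icc 1 (L - 1) := by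
      have h1 : 0 < ⌈s * L⌉₊ := Nat.ceil_pos.mpr (mul_pos hs.1 hL')
      have h2 : ⌈s * L⌉₊ < L := by exact_mod_cast (div_lt_one hL').mp hlt
      exact Finset.mem_Icc.mpr ⟨h1, by omega⟩
    rw [hF L hL s hs, if_pos hmem]
  have hF_le : ∀ L, ∀ s ∈ Ioo (0 : ℝ) 1, ‖F L s‖ ≤ |M| := by
    intro L s hs
    rcases Nat.eq_zero_or_pos L with rfl | hL
    · simp [F]
    rw [hF L hL s hs, Real.norm_eq_abs]
    split_ifs with hmem
    · exact (hbound L _ hmem).trans (le_abs_self M)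
    · simp
  have hconv := tendsto_integral_of_dominated_convergence (μ := volume.restrict (Ioo (0 : ℝ) 1))
    (fun _ => |M|)
    (fun L => (Finset.measurable_sum _ fun l _ =>
      measurable_const.indicator measurableSet_Ioc).aestronglyMeasurable)
    (integrableOn_const (by simp))
    (fun L => (ae_restrict_mem measurableSet_Ioo).mono (hF_le L))
    ((ae_restrict_mem measurableSet_Ioo).mono hlimF)
  simpa only [F, setIntegral_sum_indicator_Ioc_div] using hconv

theorem tendsto_choose_div_pow {u : ℕ → ℕ} {s : ℝ}
    (hu : Tendsto (fun L : ℕ => (u L : ℝ) / L) atTop (𝓝 s)) (k : ℕ) :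
    Tendsto (fun L : ℕ => ((u L).choose k : ℝ) / (L : ℝ) ^ k) atTop (𝓝 (s ^ k / k !)) := by
  have hprod : Tendsto (fun L : ℕ => ∏ j ∈ Finset.range k, ((u L : ℝ) / L - j / L)) atTop
      (𝓝 (∏ _j ∈ Finset.range k, s)) :=
    tendsto_finsetProd _ fun j _ => by
      simpa using hu.sub (tendsto_const_div_atTop_nhds_zero_nat (j : ℝ))
  rw [Finset.prod_const, Finset.card_range] at hprod
  refine (hprod.div_const (k ! : ℝ)).congr fun L => ?_
  rw [Nat.cast_choose_eq_descPochhammer_div, descPochhammer_eval_eq_prod_range, div_right_comm]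
  simp only [← sub_div]
  rw [Finset.prod_div_distrib, Finset.prod_const, Finset.card_range]

theorem tendsto_add_div {u : ℕ → ℕ} {s : ℝ}
    (hu : Tendsto (fun L : ℕ => (u L : ℝ) / L) atTop (𝓝 s)) (c : ℕ) :
    Tendsto (fun L : ℕ => ((u L + c : ℕ) : ℝ) / L) atTop (𝓝 s) := by
  simpa [add_div] using hu.add (tendsto_const_div_atTop_nhds_zero_nat (c : ℝ))

theorem tendsto_choose_add_choose_div_pow {u : ℕ → ℕ} {s : ℝ}
    (hu : Tendsto (fun L : ℕ => (u L : ℝ) / L) atTop (𝓝 s)) (c k : ℕ) :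
    Tendsto (fun L : ℕ => (((u L + c + 1).choose k + (u L + c).choose k : ℕ) : ℝ) / (L : ℝ) ^ k)
      atTop (𝓝 (2 * s ^ k / k !)) := by
  have h := (tendsto_choose_div_pow (tendsto_add_div hu (c + 1)) k).add
    (tendsto_choose_div_pow (tendsto_add_div hu c) k)
  simp only [← add_assoc] at h
  convert h using 2 with L
  · push_cast
    exact add_div _ _ _
  · ring

theorem Cdim_add_three (f l : ℕ) :
    Cdim (f + 3) l = (l + f + 1).choose (f + 1) + (l + f).choose (f + 1) :=
  rfl

theorem Cdim_add_three_succ (f l : ℕ) :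
    Cdim (f + 3) (l + 1) = Cdim (f + 3) l + ((l + f + 1).choose f + (l + f).choose f) := by
  simp only [Cdim_add_three, Nat.add_right_comm l 1 f, Nat.choose_succ_succ]
  ring

theorem Cdim_add_three_pos (f L : ℕ) : 0 < Cdim (f + 3) L := by
  rw [Cdim_add_three]
  exact Nat.add_pos_left (Nat.choose_pos (by omega)) _

theorem cast_Cdim_add_three_succ_sub (f l : ℕ) :
    (Cdim (f + 3) (l + 1) : ℝ) - Cdim (f + 3) l
      = (((l + f + 1).choose f + (l + f).choose f : ℕ) : ℝ) := by
  rw [Cdim_add_three_succ, Nat.cast_add, add_sub_cancel_left]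

theorem mul_Cdim_add_three_succ_sub_le {f l L : ℕ} (hl : l + 1 ≤ L) :
    L * ((l + f + 1).choose f + (l + f).choose f) ≤ 2 * (f + 1) * Cdim (f + 3) L := by
  have h1 : (l + f + 1).choose f ≤ (L + f).choose f := Nat.choose_le_choose _ (by omega)
  have h2 : (l + f).choose f ≤ (L + f).choose f := Nat.choose_le_choose _ (by omega)
  have h3 : (L + f + 1).choose (f + 1) ≤ Cdim (f + 3) L := by
    rw [Cdim_add_three]; omega
  calc L * ((l + f + 1).choose f + (l + f).choose f)
      ≤ 2 * ((L + f + 1) * (L + f).choose f) := by nlinarith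
    _ = 2 * ((f + 1) * (L + f + 1).choose (f + 1)) := by
      rw [Nat.add_one_mul_choose_eq, mul_comm (f + 1)]
    _ ≤ 2 * (f + 1) * Cdim (f + 3) L := by rw [mul_assoc]; gcongr

noncomputable def cdimWeight (d L l : ℕ) : ℝ :=
  L * (((Cdim d (l + 1) : ℝ) - Cdim d l) / Cdim d L)

theorem cdimWeight_add_three_mem_Icc {f l L : ℕ} (hl : l + 1 ≤ L) :
    cdimWeight (f + 3) L l ∈ Icc 0 (2 * (f + 1) : ℝ) := by
  have hC : (0 : ℝ) < Cdim (f + 3) L := Nat.cast_pos.mpr (Cdim_add_three_pos f L)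
  rw [cdimWeight, cast_Cdim_add_three_succ_sub, ← mul_div_assoc, mem_Icc, div_le_iff₀ hC]
  refine ⟨by positivity, ?_⟩
  exact_mod_cast mul_Cdim_add_three_succ_sub_le hl

theorem tendsto_cdimWeight_add_three {u : ℕ → ℕ} {s : ℝ}
    (hu : Tendsto (fun L : ℕ => (u L : ℝ) / L) atTop (𝓝 s)) (f : ℕ) :
    Tendsto (fun L : ℕ => cdimWeight (f + 3) L (u L)) atTop (𝓝 ((f + 1) * s ^ f)) := by
  have hid : Tendsto (fun L : ℕ => (L : ℝ) / L) atTop (𝓝 1) :=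
    tendsto_const_nhds.congr' <| (eventually_gt_atTop 0).mono fun L hL =>
      (div_self (Nat.cast_ne_zero.mpr hL.ne')).symm
  have hnum := tendsto_choose_add_choose_div_pow hu f f
  have hden := tendsto_choose_add_choose_div_pow hid f (f + 1)
  rw [one_pow, mul_one] at hden
  have hne : (2 / (f + 1)! : ℝ) ≠ 0 := by positivity
  convert hnum.div hden hne using 1
  · ext L
    rcases Nat.eq_zero_or_pos L with rfl | hL
    · simp [cdimWeight]
    have hL' : (L : ℝ) ≠ 0 := Nat.cast_ne_zero.mpr hL.ne'
    rw [Pi.div_apply, cdimWeight, cast_Cdim_add_three_succ_sub, Cdim_add_three]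
    field_simp
    ring
  · rw [Nat.factorial_succ]
    push_cast
    field_simp

theorem integral_Ioo_zero_one_eq_integral_Ioi_one_inv {E : Type*} [NormedAddCommGroup E]
    [NormedSpace ℝ E] (g : ℝ → E) :
    ∫ s in Ioo (0 : ℝ) 1, g s = ∫ t in Ioi (1 : ℝ), (t ^ 2)⁻¹ • g t⁻¹ := by
  have himg : (fun t : ℝ => t⁻¹) '' Ioi 1 = Ioo 0 1 := by
    rw [image_inv_eq_inv, inv_Ioi₀ one_pos, inv_one]
  rw [← himg, integral_image_eq_integral_abs_deriv_smul measurableSet_Ioi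
    (fun t ht => (hasDerivAt_inv (zero_lt_one.trans ht).ne').hasDerivWithinAt) inv_injective.injOn]
  refine setIntegral_congr_fun measurableSet_Ioi fun t _ => ?_
  rw [abs_neg, abs_of_nonneg (by positivity)]

theorem integral_Ioo_pow_mul_U_inv_mul (f : ℕ) (r : ℝ) :
    ∫ s in Ioo (0 : ℝ) 1, (f + 1) * s ^ f * U (s⁻¹ * r)
      = (((f + 3 : ℕ) : ℝ) - 2) * ∫ t in Ioi (1 : ℝ), U (t * r) * t ^ ((1 : ℝ) - (f + 3 : ℕ)) := by
  rw [integral_Ioo_zero_one_eq_integral_Ioi_one_inv, ← integral_const_mul]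
  refine setIntegral_congr_fun measurableSet_Ioi fun t ht => ?_
  have ht0 : 0 < t := zero_lt_one.trans ht
  have hpow : t ^ ((1 : ℝ) - (f + 3 : ℕ)) = (t ^ (f + 2))⁻¹ := by
    rw [← Real.rpow_natCast, ← Real.rpow_neg ht0.le]
    push_cast
    ring_nf
  rw [hpow, inv_inv, smul_eq_mul, inv_pow, pow_add]
  push_cast
  field_simp
  ring

theorem tendsto_discrete_weights_to_integral_general (d : ℕ) (hd : 3 ≤ d) (r : ℝ) :
    Tendsto (fun L : ℕ =>
        ∑ l ∈ Finset.Icc 1 (L - 1),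
          (((Cdim d (l + 1) : ℝ) - (Cdim d l : ℝ)) / (Cdim d L : ℝ)) *
            U (((L : ℝ) / (l : ℝ)) * r))
      atTop
      (nhds (((d : ℝ) - 2) * ∫ t in Set.Ioi (1:ℝ), U (t * r) * t ^ ((1:ℝ) - d))) := by
  obtain ⟨f, rfl⟩ : ∃ f, d = f + 3 := ⟨d - 3, by omega⟩
  set a : ℕ → ℕ → ℝ := fun L l => cdimWeight (f + 3) L l * U (L / l * r)
  have hbound : ∀ L, ∀ l ∈ Finset.Icc 1 (L - 1), |a L l| ≤ f + 1 := by
    intro L l hl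
    obtain ⟨hw0, hw⟩ := cdimWeight_add_three_mem_Icc (f := f) (by grind : l + 1 ≤ L)
    rw [abs_mul, abs_of_nonneg hw0]
    nlinarith [abs_U_le (L / l * r), abs_nonneg (U (L / l * r))]
  have hlim : ∀ s ∈ Ioo (0 : ℝ) 1, Tendsto (fun L : ℕ => a L ⌈s * L⌉₊) atTop
      (𝓝 ((f + 1) * s ^ f * U (s⁻¹ * r))) := by
    intro s hs
    have hm := (tendsto_nat_ceil_mul_div_atTop hs.1.le).comp tendsto_natCast_atTop_atTop
    have hU := (continuous_U.tendsto _).comp ((hm.inv₀ hs.1.ne').mul_const r)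
    simpa only [a, Function.comp_def, inv_div] using (tendsto_cdimWeight_add_three hm f).mul hU
  rw [← integral_Ioo_pow_mul_U_inv_mul]
  refine (tendsto_sum_div_of_tendsto_ceil hbound hlim).congr fun L =>
    Finset.sum_congr rfl fun l hl => ?_
  have hL : (L : ℝ) ≠ 0 := Nat.cast_ne_zero.mpr (by grind)
  simp only [a, cdimWeight, mul_assoc, mul_div_cancel_left₀ _ hL]

theorem tendsto_discrete_weights_to_integral (d : ℕ) (hd : 3 ≤ d) (r : ℝ) (hr : 0 < r) :
    Tendsto (fun L : ℕ =>
        ∑ l ∈ Finset.Icc 1 (L - 1),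
          (((Cdim d (l + 1) : ℝ) - (Cdim d l : ℝ)) / (Cdim d L : ℝ)) *
            U (((L : ℝ) / (l : ℝ)) * r))
      atTop
      (nhds (((d : ℝ) - 2) * ∫ t in Set.Ioi (1:ℝ), U (t * r) * t ^ ((1:ℝ) - d))) :=
  tendsto_discrete_weights_to_integral_general d hd r
end
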